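/- arXiv:math-ph/0502046 — 4 statements merged into one kernel-verified Lean document; each statement's English description precedes it below -/
import Mathlib

section
/- If g : ℝ → ℝ is three times differentiable with g' never zero and satisfies (g'')² - g' g''' = 0 on all of ℝ, then either g is affine, or g(y) = C₁ e^{C₂ y} + C₃ for constants C₁, C₂, C₃ with C₁ C₂ ≠ 0. -/
/-!
The equation says exactly that `g'' / g'` has zero derivative, so `g'' = c g'` for a constant `c`.
Then `g' e^{-cy}` is constant, i.e. `g' = g'(0) e^{cy}`, and integrating once more gives an affine
`g` when `c = 0` and `g = (g'(0) / c) e^{cy} + C₃` otherwise.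
-/

open Real

theorem exists_deriv_eq_const_mul_of_sq_deriv_eq {f : ℝ → ℝ} (hf : Differentiable ℝ f)
    (hf' : Differentiable ℝ (deriv f)) (hf0 : ∀ y, f y ≠ 0)
    (heq : ∀ y, deriv f y ^ 2 = f y * deriv (deriv f) y) :
    ∃ c, ∀ y, deriv f y = c * f y := by
  have hquot : ∀ y, deriv (deriv f / f) y = 0 := fun y ↦ by
    rw [deriv_div (hf' y) (hf y) (hf0 y), ← sq, heq, mul_comm (deriv (deriv f) y), sub_self,
      zero_div]
  refine ⟨(deriv f / f) 0, fun y ↦ ?_⟩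
  rw [← is_const_of_deriv_eq_zero (hf'.div hf hf0) hquot y 0, Pi.div_apply,
    div_mul_cancel₀ _ (hf0 y)]

theorem eq_mul_exp_of_deriv_eq_const_mul {f : ℝ → ℝ} {c : ℝ} (hf : Differentiable ℝ f)
    (hderiv : ∀ y, deriv f y = c * f y) (y : ℝ) : f y = f 0 * exp (c * y) := by
  have hexp : ∀ x, HasDerivAt (fun x ↦ exp (-(c * x))) (-c * exp (-(c * x))) x := fun x ↦ by
    simpa [mul_comm] using ((hasDerivAt_id x).const_mul c).neg.exp
  have hprod : ∀ x, deriv (fun x ↦ f x * exp (-(c * x))) x = 0 := fun x ↦ by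
    rw [deriv_fun_mul (hf x) (hexp x).differentiableAt, (hexp x).deriv, hderiv]
    ring
  have : f y * exp (-(c * y)) = f 0 * exp (-(c * 0)) :=
    is_const_of_deriv_eq_zero (fun x ↦ (hf x).mul (hexp x).differentiableAt) hprod y 0
  rw [mul_zero, neg_zero, exp_zero, mul_one] at this
  rw [← this, mul_assoc, ← exp_add, neg_add_cancel, exp_zero, mul_one]

theorem exists_eq_add_of_hasDerivAt_deriv {f F : ℝ → ℝ} (hf : Differentiable ℝ f)
    (hF : ∀ y, HasDerivAt F (deriv f y) y) : ∃ b, ∀ y, f y = F y + b := by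
  obtain ⟨b, hb⟩ := isOpen_univ.exists_eq_add_of_deriv_eq isPreconnected_univ hf.differentiableOn
    (fun y _ ↦ (hF y).differentiableAt.differentiableWithinAt) (fun y _ ↦ (hF y).deriv.symm)
  exact ⟨b, fun y ↦ hb (Set.mem_univ y)⟩

/-- If `g` is `C³` with nowhere-vanishing derivative and `(g'')² = g' g'''` on `ℝ`,
then `g` is affine or `g(y) = C₁ e^{C₂ y} + C₃` with `C₁ C₂ ≠ 0`. -/
theorem exp_or_affine_of_g_equation
    (g : ℝ → ℝ) (hg : ContDiff ℝ 3 g)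
    (hg' : ∀ y, deriv g y ≠ 0)
    (heq : ∀ y, (deriv (deriv g) y)^2 = deriv g y * deriv (deriv (deriv g)) y) :
    (∃ a b : ℝ, ∀ y, g y = a * y + b) ∨
    (∃ C₁ C₂ C₃ : ℝ, C₁ * C₂ ≠ 0 ∧ ∀ y, g y = C₁ * Real.exp (C₂ * y) + C₃) := by
  have hg₀ : Differentiable ℝ g := hg.differentiable (by norm_num)
  have hg₁ : Differentiable ℝ (deriv g) := by
    simpa using hg.differentiable_iteratedDeriv 1 (by norm_num)
  have hg₂ : Differentiable ℝ (deriv (deriv g)) := by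
    simpa [iteratedDeriv_succ] using hg.differentiable_iteratedDeriv 2 (by norm_num)
  obtain ⟨c, hc⟩ := exists_deriv_eq_const_mul_of_sq_deriv_eq hg₁ hg₂ hg' heq
  have hexp := eq_mul_exp_of_deriv_eq_const_mul hg₁ hc
  rcases eq_or_ne c 0 with rfl | hc₀
  · left
    obtain ⟨b, hb⟩ := exists_eq_add_of_hasDerivAt_deriv hg₀ (F := fun y ↦ deriv g 0 * y)
      fun y ↦ by simpa [hexp y] using (hasDerivAt_id y).const_mul (deriv g 0)
    exact ⟨_, b, hb⟩
  · right
    obtain ⟨b, hb⟩ := exists_eq_add_of_hasDerivAt_deriv hg₀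
      (F := fun y ↦ deriv g 0 / c * exp (c * y)) fun y ↦ by
        refine ((((hasDerivAt_id' y).const_mul c).exp).const_mul (deriv g 0 / c)).congr_deriv ?_
        rw [hexp y]
        field_simp
    exact ⟨_, c, b, mul_ne_zero (div_ne_zero (hg' 0) hc₀) hc₀, hb⟩
end

section
/- Suppose g satisfies g'' = -α g² + δ g + ξ and additionally 3 N g'' = 2α c √(g'²) for constants N, c with c ≠ 0 and α ≠ 0; if g' is not identically zero on any interval, then this leads to a contradiction unless α = N = 0. In particular, if α ≠ 0, no nonconstant solution g of g'' = -α g² + δ g + ξ satisfies 3 N g'' = 2α c |g'| with c > 0 on an open interval, for any constant N. -/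
/-!
By Darboux's theorem the nonvanishing derivative `g'` has constant sign `ε`, so the compatibility
condition becomes the linear equation `g'' = λ g'` with `λ = 2 α c ε / (3 N)`. Differentiating
`g'' = -α g² + δ g + ξ` and using `g''' = λ g'' = λ² g'` gives `(-2 α g + δ) g' = λ² g'`; cancelling
`g'` forces `g = (δ - λ²) / (2 α)` to be constant, contradicting `g' ≠ 0`.
-/

open Set

theorem exists_abs_deriv_eq_mul_deriv {f : ℝ → ℝ} {s : Set ℝ} (hs : Convex ℝ s)
    (hf : ∀ x ∈ s, DifferentiableAt ℝ f x) (hf' : ∀ x ∈ s, deriv f x ≠ 0) :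
    ∃ ε : ℝ, |ε| = 1 ∧ ∀ x ∈ s, |deriv f x| = ε * deriv f x := by
  rcases hasDerivWithinAt_forall_lt_or_forall_gt_of_forall_ne hs
    (fun x hx => (hf x hx).hasDerivAt.hasDerivWithinAt) hf' with hneg | hpos
  · exact ⟨-1, by norm_num, fun x hx => by rw [abs_of_neg (hneg x hx)]; ring⟩
  · exact ⟨1, by norm_num, fun x hx => by rw [abs_of_pos (hpos x hx), one_mul]⟩

theorem neg_two_mul_add_mul_deriv_eq_sq_mul_deriv {α δ ξ l : ℝ} {g : ℝ → ℝ} {s : Set ℝ}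
    (hs : IsOpen s) (hg : ContDiffOn ℝ 2 g s)
    (hode : ∀ y ∈ s, deriv (deriv g) y = -α * g y ^ 2 + δ * g y + ξ)
    (hlin : ∀ y ∈ s, deriv (deriv g) y = l * deriv g y) {y : ℝ} (hy : y ∈ s) :
    (-2 * α * g y + δ) * deriv g y = l ^ 2 * deriv g y := by
  have hs_y : s ∈ nhds y := hs.mem_nhds hy
  have hgy : DifferentiableAt ℝ g y := (hg.differentiableOn (by norm_num)).differentiableAt hs_y
  have hg'y : DifferentiableAt ℝ (deriv g) y :=
    ((hg.deriv_of_isOpen (m := 1) hs (by norm_num)).differentiableOn one_ne_zero).differentiableAt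
      hs_y
  have hEq : EqOn (fun z => -α * g z ^ 2 + δ * g z + ξ) (fun z => l * deriv g z) s :=
    fun z hz => (hode z hz).symm.trans (hlin z hz)
  have hL : deriv (fun z => -α * g z ^ 2 + δ * g z + ξ) y = (-2 * α * g y + δ) * deriv g y := by
    refine ((((hgy.hasDerivAt.pow 2).const_mul (-α)).add (hgy.hasDerivAt.const_mul δ)).add_const
      ξ).deriv.trans ?_
    push_cast
    ring
  have hR : deriv (fun z => l * deriv g z) y = l ^ 2 * deriv g y := by
    rw [deriv_const_mul _ hg'y, hlin y hy]
    ring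
  rw [← hL, ← hR, hEq.deriv hs hy]

/-- If `α ≠ 0`, `c > 0` and `g` solves `g'' = -α g² + δ g + ξ` on an open interval
with nonvanishing `g'`, then there is no constant `N` with `3 N g'' = 2 α c |g'|`
on that interval. -/
theorem no_compatible_constant
    (α δ ξ c a b : ℝ) (hα : α ≠ 0) (hc : 0 < c) (hab : a < b)
    (g : ℝ → ℝ) (hg : ContDiffOn ℝ 2 g (Set.Ioo a b))
    (hg' : ∀ y ∈ Set.Ioo a b, deriv g y ≠ 0)
    (hode : ∀ y ∈ Set.Ioo a b,
      deriv (deriv g) y = -α * (g y)^2 + δ * g y + ξ) :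
    ¬ ∃ N : ℝ, ∀ y ∈ Set.Ioo a b,
      3 * N * deriv (deriv g) y = 2 * α * c * |deriv g y| := by
  rintro ⟨N, hN⟩
  obtain ⟨m, hm⟩ := nonempty_Ioo.2 hab
  obtain ⟨ε, -, habs⟩ := exists_abs_deriv_eq_mul_deriv (convex_Ioo a b)
    (fun y hy => (hg.differentiableOn (by norm_num)).differentiableAt (isOpen_Ioo.mem_nhds hy)) hg'
  have hN0 : N ≠ 0 := by
    rintro rfl
    have hm' := hg' m hm
    have : 2 * α * c * |deriv g m| ≠ 0 := by positivity
    exact this (by linarith [hN m hm])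
  set l := 2 * α * c * ε / (3 * N)
  have hlin : ∀ y ∈ Ioo a b, deriv (deriv g) y = l * deriv g y := by
    intro y hy
    rw [div_mul_eq_mul_div, eq_div_iff (by positivity), mul_assoc, ← habs y hy, ← hN y hy]
    ring
  have hconst : EqOn g (fun _ => (δ - l ^ 2) / (2 * α)) (Ioo a b) := by
    intro y hy
    have := mul_right_cancel₀ (hg' y hy)
      (neg_two_mul_add_mul_deriv_eq_sq_mul_deriv isOpen_Ioo hg hode hlin hy)
    rw [eq_div_iff (by positivity)]
    linarith
  exact hg' m hm (by simpa using hconst.deriv isOpen_Ioo hm)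
end

section
/- The function f(x) = f₁ + (f₃ - f₁) tanh²(ω(x-x₀)) from Table 1 row F₃ (with α > 0, β² - 4αγ > 0, ω² = √(β²-4αγ)/4, f₁ = (-β - √(β²-4αγ))/(2α), f₃ = f₁ + 6ω²/α) satisfies, with c₁ = 2k f₁ and k < 0, the relation k (f')⁴ · k + 2k(c₁ - 2kf)(f')² f'' + (c₁-2kf)²((f'')² - f' f''') = -N₁ (c₁-2kf)^{3/2} ((f')²)^{3/2} / ε₁ with N₁ = (8 ε₂ N₂)/(k ε₁) and N₂ = -ε₂ (k/2)√(-kα/3), i.e. equation (4.25a) holds with these constants. -/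
/-!
Write `T = tanh (ω (x - x₀))` and `A = 6 ω² / α`, so that `f = f₁ + A T²` and `c₁ - 2 k f = -2 k A T²`.
Since `T' = ω (1 - T²)`, every derivative of `f` is a polynomial in `T`; the numerator of (4.25a)
collapses to `128 k² A⁴ ω⁴ T⁶ (1 - T²)³` and the denominator to
`(-2 k A)^{3/2} (2 A ω T² (1 - T²))³`, so the quotient is the constant `-8 k ω / √(-2 k A)`,
which equals `4 √(-k α / 3)` because `(-k α / 3) (-2 k A) = (2 k ω)²`.
-/

open Real

namespace Real

theorem hasDerivAt_tanh (y : ℝ) : HasDerivAt tanh (1 - tanh y ^ 2) y := by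
  have hcosh : cosh y ≠ 0 := (cosh_pos y).ne'
  have hquot := (hasDerivAt_sinh y).div (hasDerivAt_cosh y) hcosh
  rw [show tanh = sinh / cosh from funext tanh_eq_sinh_div_cosh]
  refine hquot.congr_deriv ?_
  rw [Pi.div_apply]
  field_simp

theorem rpow_three_halves {x : ℝ} (hx : 0 ≤ x) : x ^ ((3:ℝ)/2) = x * √x := by
  rw [sqrt_eq_rpow, ← rpow_one_add' hx (by norm_num)]
  norm_num

theorem sq_rpow_three_halves (a : ℝ) : (a ^ 2) ^ ((3:ℝ)/2) = |a| ^ 3 := by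
  rw [rpow_three_halves (sq_nonneg a), sqrt_sq_eq_abs, ← sq_abs]
  ring

end Real

section TanhSqProfile

variable (c A ω x₀ : ℝ)

noncomputable def tanhSqProfile (x : ℝ) : ℝ := c + A * tanh (ω * (x - x₀)) ^ 2

theorem hasDerivAt_tanh_mul_sub (x : ℝ) :
    HasDerivAt (fun x => tanh (ω * (x - x₀))) (ω * (1 - tanh (ω * (x - x₀)) ^ 2)) x := by
  have hinner : HasDerivAt (fun x => ω * (x - x₀)) ω x := by
    simpa using ((hasDerivAt_id x).sub_const x₀).const_mul ω
  exact ((hasDerivAt_tanh (ω * (x - x₀))).comp x hinner).congr_deriv (mul_comm _ _)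

theorem deriv_tanhSqProfile :
    deriv (tanhSqProfile c A ω x₀) =
      fun x => 2 * A * ω * (tanh (ω * (x - x₀)) - tanh (ω * (x - x₀)) ^ 3) := by
  funext x
  refine HasDerivAt.deriv ?_
  refine ((((hasDerivAt_tanh_mul_sub ω x₀ x).pow 2).const_mul A).const_add c).congr_deriv ?_
  push_cast
  ring

theorem deriv_deriv_tanhSqProfile :
    deriv (deriv (tanhSqProfile c A ω x₀)) =
      fun x => 2 * A * ω ^ 2 *
        (1 - 4 * tanh (ω * (x - x₀)) ^ 2 + 3 * tanh (ω * (x - x₀)) ^ 4) := by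
  rw [deriv_tanhSqProfile]
  funext x
  refine HasDerivAt.deriv ?_
  have hT := hasDerivAt_tanh_mul_sub ω x₀ x
  refine ((hT.sub (hT.pow 3)).const_mul (2 * A * ω)).congr_deriv ?_
  push_cast
  ring

theorem deriv_deriv_deriv_tanhSqProfile :
    deriv (deriv (deriv (tanhSqProfile c A ω x₀))) =
      fun x => 2 * A * ω ^ 3 * (-8 * tanh (ω * (x - x₀)) + 20 * tanh (ω * (x - x₀)) ^ 3
        - 12 * tanh (ω * (x - x₀)) ^ 5) := by
  rw [deriv_deriv_tanhSqProfile]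
  funext x
  refine HasDerivAt.deriv ?_
  have hT := hasDerivAt_tanh_mul_sub ω x₀ x
  refine ((((hasDerivAt_const x 1).sub ((hT.pow 2).const_mul 4)).add
    ((hT.pow 4).const_mul 3)).const_mul (2 * A * ω ^ 2)).congr_deriv ?_
  push_cast
  ring

end TanhSqProfile

-- The left-hand side of (4.25a) divided by `-ε₁`, with `D = c₁ - 2 k f` and `fᵢ` the derivatives.
noncomputable def eq425Quotient (k D f₁ f₂ f₃ : ℝ) : ℝ :=
  (k ^ 2 * f₁ ^ 4 + 2 * k * D * f₁ ^ 2 * f₂ + D ^ 2 * (f₂ ^ 2 - f₁ * f₃))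
    / (D ^ ((3:ℝ)/2) * (f₁ ^ 2) ^ ((3:ℝ)/2))

theorem eq425Quotient_tanh_poly {k A ω t : ℝ} (hk : k < 0) (hA : 0 < A) (hω : 0 < ω)
    (ht : t ≠ 0) (ht1 : t ^ 2 < 1) :
    eq425Quotient k (-2 * k * A * t ^ 2) (2 * A * ω * (t - t ^ 3))
        (2 * A * ω ^ 2 * (1 - 4 * t ^ 2 + 3 * t ^ 4))
        (2 * A * ω ^ 3 * (-8 * t + 20 * t ^ 3 - 12 * t ^ 5))
      = -8 * k * ω / √(-2 * k * A) := by
  have hu : 0 < -2 * k * A := by nlinarith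
  have hP : 0 < 2 * A * ω * (t ^ 2 * (1 - t ^ 2)) := by
    have : 0 < t ^ 2 := by positivity
    have : 0 < 1 - t ^ 2 := by linarith
    positivity
  have hden : (-2 * k * A * t ^ 2) ^ ((3:ℝ)/2) * ((2 * A * ω * (t - t ^ 3)) ^ 2) ^ ((3:ℝ)/2)
      = (-2 * k * A) * √(-2 * k * A) * (2 * A * ω * (t ^ 2 * (1 - t ^ 2))) ^ 3 := by
    rw [mul_rpow hu.le (sq_nonneg t), sq_rpow_three_halves, sq_rpow_three_halves,
      rpow_three_halves hu.le, mul_assoc, ← mul_pow, ← abs_mul,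
      show t * (2 * A * ω * (t - t ^ 3)) = 2 * A * ω * (t ^ 2 * (1 - t ^ 2)) by ring,
      abs_of_pos hP]
  rw [eq425Quotient, hden, div_eq_div_iff (by positivity) (by positivity)]
  ring

theorem eq425Quotient_tanhSqProfile {k c A ω x₀ x : ℝ} (hk : k < 0) (hA : 0 < A) (hω : 0 < ω)
    (ht : tanh (ω * (x - x₀)) ≠ 0) :
    eq425Quotient k (2 * k * c - 2 * k * tanhSqProfile c A ω x₀ x)
        (deriv (tanhSqProfile c A ω x₀) x) (deriv (deriv (tanhSqProfile c A ω x₀)) x)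
        (deriv (deriv (deriv (tanhSqProfile c A ω x₀))) x)
      = -8 * k * ω / √(-2 * k * A) := by
  have hD : 2 * k * c - 2 * k * tanhSqProfile c A ω x₀ x
      = -2 * k * A * tanh (ω * (x - x₀)) ^ 2 := by
    rw [tanhSqProfile]; ring
  rw [hD, deriv_deriv_deriv_tanhSqProfile, deriv_deriv_tanhSqProfile, deriv_tanhSqProfile]
  exact eq425Quotient_tanh_poly hk hA hω ht (tanh_sq_lt_one _)

theorem tanh_table_row_F3_general
    (α β γ k ε₁ ε₂ x₀ : ℝ)
    (hα : 0 < α) (hdisc : 0 < β^2 - 4*α*γ) (hk : k < 0)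
    (hε₁ : ε₁ = 1 ∨ ε₁ = -1) (hε₂ : ε₂ = 1 ∨ ε₂ = -1)
    (ω f₁ f₃ c₁ N₁ N₂ : ℝ)
    (hω : ω = (β^2 - 4*α*γ) ^ ((1:ℝ)/4) / 2)
    (hf₃ : f₃ = f₁ + 6*ω^2/α)
    (hc₁ : c₁ = 2*k*f₁)
    (hN₂ : N₂ = -ε₂ * (k/2) * Real.sqrt (-k*α/3))
    (hN₁ : N₁ = 8*ε₂*N₂ / (k*ε₁))
    (f : ℝ → ℝ)
    (hf : ∀ x, f x = f₁ + (f₃ - f₁) * (Real.tanh (ω*(x - x₀)))^2) :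
    ∀ x, Real.tanh (ω*(x - x₀)) ≠ 0 → Real.tanh (ω*(x - x₀)) ≠ 1 →
      Real.tanh (ω*(x - x₀)) ≠ -1 → 0 < c₁ - 2*k*f x →
      -ε₁ * (k^2 * (deriv f x)^4
          + 2*k*(c₁ - 2*k*f x) * (deriv f x)^2 * deriv (deriv f) x
          + (c₁ - 2*k*f x)^2 * ((deriv (deriv f) x)^2
              - deriv f x * deriv (deriv (deriv f)) x))
        / ((c₁ - 2*k*f x) ^ ((3:ℝ)/2) * ((deriv f x)^2) ^ ((3:ℝ)/2)) = N₁ := by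
  intro x ht _ _ _
  have hω₀ : 0 < ω := by rw [hω]; positivity
  have hA : 0 < 6 * ω ^ 2 / α := by positivity
  have hprofile : f = tanhSqProfile f₁ (6 * ω ^ 2 / α) ω x₀ := by
    funext y; rw [hf, hf₃, tanhSqProfile]; ring
  have hamplitude : -8 * k * ω / √(-2 * k * (6 * ω ^ 2 / α)) = 4 * √(-k * α / 3) := by
    rw [div_eq_iff (sqrt_pos.mpr (by nlinarith)).ne', mul_assoc 4, ← sqrt_mul (by nlinarith),
      show -k * α / 3 * (-2 * k * (6 * ω ^ 2 / α)) = (-2 * k * ω) ^ 2 by field_simp; ring,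
      sqrt_sq (by nlinarith)]
    ring
  have hN₁' : N₁ = -4 * ε₁ * √(-k * α / 3) := by
    have hk₀ : k ≠ 0 := hk.ne
    rw [hN₁, hN₂]
    rcases hε₁ with rfl | rfl <;> rcases hε₂ with rfl | rfl <;> field_simp <;> ring
  rw [mul_div_assoc, hc₁, hprofile]
  change -ε₁ * eq425Quotient k _ _ _ _ = N₁
  rw [eq425Quotient_tanhSqProfile hk hA hω₀ ht, hamplitude, hN₁']
  ring

/-- Table 1 row `F₃`: `f(x) = f₁ + (f₃ - f₁) tanh²(ω(x-x₀))` with `c₁ = 2k f₁`,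
`k < 0`, satisfies eq. (4.25a) with `N₁ = 8ε₂N₂/(kε₁)` and `N₂ = -ε₂(k/2)√(-kα/3)`. -/
theorem tanh_table_row_F3
    (α β γ k ε₁ ε₂ x₀ : ℝ)
    (hα : 0 < α) (hdisc : 0 < β^2 - 4*α*γ) (hk : k < 0)
    (hε₁ : ε₁ = 1 ∨ ε₁ = -1) (hε₂ : ε₂ = 1 ∨ ε₂ = -1)
    (ω f₁ f₃ c₁ N₁ N₂ : ℝ)
    (hω : ω = (β^2 - 4*α*γ) ^ ((1:ℝ)/4) / 2)
    (hf₁ : f₁ = (-β - Real.sqrt (β^2 - 4*α*γ)) / (2*α))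
    (hf₃ : f₃ = f₁ + 6*ω^2/α)
    (hc₁ : c₁ = 2*k*f₁)
    (hN₂ : N₂ = -ε₂ * (k/2) * Real.sqrt (-k*α/3))
    (hN₁ : N₁ = 8*ε₂*N₂ / (k*ε₁))
    (f : ℝ → ℝ)
    (hf : ∀ x, f x = f₁ + (f₃ - f₁) * (Real.tanh (ω*(x - x₀)))^2) :
    ∀ x, Real.tanh (ω*(x - x₀)) ≠ 0 → Real.tanh (ω*(x - x₀)) ≠ 1 →
      Real.tanh (ω*(x - x₀)) ≠ -1 → 0 < c₁ - 2*k*f x →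
      -ε₁ * (k^2 * (deriv f x)^4
          + 2*k*(c₁ - 2*k*f x) * (deriv f x)^2 * deriv (deriv f) x
          + (c₁ - 2*k*f x)^2 * ((deriv (deriv f) x)^2
              - deriv f x * deriv (deriv (deriv f)) x))
        / ((c₁ - 2*k*f x) ^ ((3:ℝ)/2) * ((deriv f x)^2) ^ ((3:ℝ)/2)) = N₁ :=
  tanh_table_row_F3_general α β γ k ε₁ ε₂ x₀ hα hdisc hk hε₁ hε₂ ω f₁ f₃ c₁ N₁ N₂ hω hf₃ hc₁ hN₂ hN₁
    f hf
end

section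
/- Conversely, if f : ℝ → ℝ satisfies f'' = βf + γ with β > 0 and also (f'')² = f' f''' on ℝ, then writing f(x) = f₁e^{√β x} + f₂e^{-√β x} - γ/β, the coefficients satisfy f₁ f₂ = 0. -/
/-- Conversely, if `f'' = βf + γ` with `β > 0` and `(f'')² = f' f'''` on `ℝ`, then
writing `f(x) = f₁e^{√β x} + f₂e^{-√β x} - γ/β`, the coefficients satisfy `f₁ f₂ = 0`. -/
theorem exp_solution_coefficients
    (β γ : ℝ) (hβ : 0 < β)
    (f : ℝ → ℝ) (hf : ContDiff ℝ 3 f)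
    (hode : ∀ x, deriv (deriv f) x = β * f x + γ)
    (heq : ∀ x, (deriv (deriv f) x)^2 = deriv f x * deriv (deriv (deriv f)) x) :
    ∀ f₁ f₂ : ℝ, (∀ x, f x = f₁ * Real.exp (Real.sqrt β * x)
        + f₂ * Real.exp (-(Real.sqrt β * x)) - γ/β) → f₁ * f₂ = 0 := by
  intro f₁ f₂ hform
  set s := Real.sqrt β with hsdef
  have hs : s ^ 2 = β := Real.sq_sqrt hβ.le
  have he1 : ∀ x : ℝ, HasDerivAt (fun x => Real.exp (s * x)) (s * Real.exp (s * x)) x := by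
    intro x
    have := (Real.hasDerivAt_exp (s * x)).comp x ((hasDerivAt_id x).const_mul s)
    simpa [Function.comp_def, mul_comm] using this
  have he2 : ∀ x : ℝ, HasDerivAt (fun x => Real.exp (-(s * x))) (-s * Real.exp (-(s * x))) x := by
    intro x
    have := (Real.hasDerivAt_exp (-(s * x))).comp x (((hasDerivAt_id x).const_mul s).neg)
    simpa [Function.comp_def, mul_comm] using this
  have hfg : f = fun x => f₁ * Real.exp (s * x) + f₂ * Real.exp (-(s * x)) - γ / β :=
    funext hform
  have hd1 : deriv f = fun x => f₁ * (s * Real.exp (s * x)) + f₂ * (-s * Real.exp (-(s * x))) := by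
    rw [hfg]; funext x
    exact ((((he1 x).const_mul f₁).add ((he2 x).const_mul f₂)).sub_const _).deriv
  have hd2 : deriv (deriv f) = fun x =>
      f₁ * (s * (s * Real.exp (s * x))) + f₂ * (-s * (-s * Real.exp (-(s * x)))) := by
    rw [hd1]; funext x
    exact ((((he1 x).const_mul s).const_mul f₁).add
      (((he2 x).const_mul (-s)).const_mul f₂)).deriv
  have hd3 : deriv (deriv (deriv f)) = fun x =>
      f₁ * (s * (s * (s * Real.exp (s * x)))) + f₂ * (-s * (-s * (-s * Real.exp (-(s * x))))) := by
    rw [hd2]; funext x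
    exact (((((he1 x).const_mul s).const_mul s).const_mul f₁).add
      ((((he2 x).const_mul (-s)).const_mul (-s)).const_mul f₂)).deriv
  have h0 := heq 0
  rw [hd3, hd2, hd1] at h0
  simp only [mul_zero, neg_zero, Real.exp_zero, mul_one] at h0
  have h4 : (4 * β ^ 2) * (f₁ * f₂) = 0 := by
    have hs4 : β ^ 2 = (s ^ 2) ^ 2 := by rw [hs]
    rw [hs4]; linear_combination h0
  rcases mul_eq_zero.mp h4 with h | h
  · exact absurd h (by positivity)
  · exact h
end
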